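/- Let (A, *, α) be a Hom-Novikov superalgebra with H²_α(A,A) = 0 (every 2-Hom-cocycle is a coboundary δ¹_hom of a 1-Hom-cochain). Then (A, *, α) is analytically rigid: every 1-parameter formal deformation g_t is equivalent to the null deformation G₀. -/

import Mathlib

/-- A 1-parameter formal deformation of a Hom-Novikov superalgebra, given by its
sequence of coefficient bilinear maps. -/
def IsDeformation {𝕜 A : Type*} [Field 𝕜] [AddCommGroup A] [Module 𝕜 A]
    (G : ZMod 2 → Submodule 𝕜 A) (mul : A →ₗ[𝕜] A →ₗ[𝕜] A) (α : A →ₗ[𝕜] A)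
    (Gd : ℕ → A →ₗ[𝕜] A →ₗ[𝕜] A) : Prop :=
  Gd 0 = mul ∧
  (∀ n : ℕ, ∀ i j : ZMod 2, ∀ x ∈ G i, ∀ y ∈ G j, Gd n x y ∈ G (i + j)) ∧
  (∀ n : ℕ, ∀ x y : A, α (Gd n x y) = Gd n (α x) (α y)) ∧
  (∀ n : ℕ, ∀ i j k : ZMod 2, ∀ x ∈ G i, ∀ y ∈ G j, ∀ z ∈ G k,
    ∑ p ∈ Finset.HasAntidiagonal.antidiagonal n,
      (Gd p.1 (α x) (Gd p.2 y z) - Gd p.1 (Gd p.2 x y) (α z)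
        - ((-1 : 𝕜) ^ (i.val * j.val)) •
            (Gd p.1 (α y) (Gd p.2 x z) - Gd p.1 (Gd p.2 y x) (α z))) = 0) ∧
  (∀ n : ℕ, ∀ i j k : ZMod 2, ∀ x ∈ G i, ∀ y ∈ G j, ∀ z ∈ G k,
    ∑ p ∈ Finset.HasAntidiagonal.antidiagonal n,
      (Gd p.1 (Gd p.2 x y) (α z)
        - ((-1 : 𝕜) ^ (j.val * k.val)) • Gd p.1 (Gd p.2 x z) (α y)) = 0)

/-!
The equivalence `φ_t` is built one degree at a time. Suppose `φ_0 = id, φ_1, …, φ_k` (even,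
commuting with `α`) intertwine `g_t` and `G₀` up to degree `k`. The degree `k + 1` defect
`φ_t ∘ g_t - G₀ ∘ (φ_t ⊗ φ_t)` is an even, `α`-compatible 2-cochain. Expanding the two deformed
Hom-Novikov identities in degree `k + 1` and using the identities of `G₀` termwise shows that the
defect satisfies the linearisations at `G₀` of both identities; their sum is exactly `δ²`, so the
defect is a cocycle, hence equal to `δ¹ f`, and replacing `φ_{k+1}` by `φ_{k+1} + f` removes it
without changing the lower degrees. Coefficient `m` of `φ_t` is then the one fixed at stage `m`.
-/

namespace Finset

variable {M : Type*} [AddCommMonoid M]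

def antidiagonal3 (n : ℕ) : Finset (ℕ × ℕ × ℕ) :=
  (range (n + 1) ×ˢ range (n + 1) ×ˢ range (n + 1)).filter fun t => t.1 + t.2.1 + t.2.2 = n

@[simp]
lemma mem_antidiagonal3 {n : ℕ} {t : ℕ × ℕ × ℕ} :
    t ∈ antidiagonal3 n ↔ t.1 + t.2.1 + t.2.2 = n := by
  simp only [antidiagonal3, mem_filter, mem_product, mem_range]
  omega

lemma sum_antidiagonal_sum_antidiagonal_snd (n : ℕ) (f : ℕ × ℕ × ℕ → M) :
    ∑ p ∈ antidiagonal n, ∑ q ∈ antidiagonal p.2, f (p.1, q) = ∑ t ∈ antidiagonal3 n, f t := by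
  rw [sum_sigma']
  refine sum_nbij' (fun x => (x.1.1, x.2)) (fun t => ⟨(t.1, t.2.1 + t.2.2), t.2⟩) ?_ ?_ ?_ ?_ ?_
  · rintro ⟨⟨a, m⟩, b, c⟩
    simp only [mem_sigma, HasAntidiagonal.mem_antidiagonal, mem_antidiagonal3]
    omega
  · simp +contextual [add_assoc]
  · rintro ⟨⟨a, m⟩, b, c⟩
    simp only [mem_sigma, HasAntidiagonal.mem_antidiagonal, and_imp]
    rintro - rfl
    rfl
  all_goals simp

lemma sum_antidiagonal_sum_antidiagonal_fst (n : ℕ) (f : ℕ × ℕ × ℕ → M) :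
    ∑ p ∈ antidiagonal n, ∑ q ∈ antidiagonal p.1, f (q.1, q.2, p.2) =
      ∑ t ∈ antidiagonal3 n, f t := by
  rw [sum_sigma']
  refine sum_nbij' (fun x => (x.2.1, x.2.2, x.1.2)) (fun t => ⟨(t.1 + t.2.1, t.2.2), (t.1, t.2.1)⟩)
    ?_ ?_ ?_ ?_ ?_
  · rintro ⟨⟨m, c⟩, a, b⟩
    simp only [mem_sigma, HasAntidiagonal.mem_antidiagonal, mem_antidiagonal3]
    omega
  · simp
  · rintro ⟨⟨m, c⟩, a, b⟩
    simp only [mem_sigma, HasAntidiagonal.mem_antidiagonal, and_imp]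
    rintro - rfl
    rfl
  all_goals simp

lemma sum_antidiagonal3_swap23 (n : ℕ) (f : ℕ × ℕ × ℕ → M) :
    ∑ t ∈ antidiagonal3 n, f (t.1, t.2.2, t.2.1) = ∑ t ∈ antidiagonal3 n, f t :=
  sum_nbij' (fun t => (t.1, t.2.2, t.2.1)) (fun t => (t.1, t.2.2, t.2.1))
    (by simp +contextual [add_right_comm]) (by simp +contextual [add_right_comm])
    (by simp) (by simp) (by simp)

lemma sum_antidiagonal3_swap12 (n : ℕ) (f : ℕ × ℕ × ℕ → M) :
    ∑ t ∈ antidiagonal3 n, f (t.2.1, t.1, t.2.2) = ∑ t ∈ antidiagonal3 n, f t :=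
  sum_nbij' (fun t => (t.2.1, t.1, t.2.2)) (fun t => (t.2.1, t.1, t.2.2))
    (by simp +contextual [add_comm]) (by simp +contextual [add_comm])
    (by simp) (by simp) (by simp)

lemma sum_antidiagonal_eq_single_fst {n : ℕ} {f : ℕ × ℕ → M}
    (hf : ∀ p ∈ antidiagonal n, p.1 < n → f p = 0) : ∑ p ∈ antidiagonal n, f p = f (n, 0) :=
  sum_eq_single_of_mem _ (by simp) fun p hp hne => hf p hp <| by
    rw [HasAntidiagonal.mem_antidiagonal] at hp
    exact lt_of_le_of_ne (by omega) fun h => hne (Prod.ext h (by omega))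

lemma sum_antidiagonal_eq_single_snd {n : ℕ} {f : ℕ × ℕ → M}
    (hf : ∀ p ∈ antidiagonal n, p.2 < n → f p = 0) : ∑ p ∈ antidiagonal n, f p = f (0, n) := by
  rw [← Nat.sum_antidiagonal_swap]
  exact sum_antidiagonal_eq_single_fst fun p hp =>
    hf p.swap (HasAntidiagonal.swap_mem_antidiagonal.2 hp)

end Finset

theorem exists_seq_of_forall_exists_succ {β : Type*} {P : ℕ → β → Prop} {R : ℕ → β → β → Prop}
    {b : β} (h0 : P 0 b) (hsucc : ∀ k b, P k b → ∃ b', P (k + 1) b' ∧ R k b b') :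
    ∃ s : ℕ → β, (∀ k, P k (s k)) ∧ ∀ k, R k (s k) (s (k + 1)) := by
  choose next hnext using hsucc
  let s : (k : ℕ) → {b // P k b} := fun k =>
    Nat.rec ⟨b, h0⟩ (fun k b => ⟨next k b.1 b.2, (hnext k b.1 b.2).1⟩) k
  exact ⟨fun k => (s k).1, fun k => (s k).2, fun k => (hnext k _ (s k).2).2⟩

namespace HomNovikov

open Finset

section Coefficients

variable {R A : Type*} [CommRing R] [AddCommGroup A] [Module R A]
  (mul : A →ₗ[R] A →ₗ[R] A) (Gd : ℕ → A →ₗ[R] A →ₗ[R] A) (ψ : ℕ → A →ₗ[R] A)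

/-- With `φ_t = ∑ ψ m t^m` and `g_t = ∑ Gd m t^m`, `compCoeff` and `mulCoeff` are the degree `n`
coefficients of `φ_t ∘ g_t` and of `mul ∘ (φ_t × φ_t)`. -/
def compCoeff (n : ℕ) : A →ₗ[R] A →ₗ[R] A :=
  ∑ p ∈ antidiagonal n, (Gd p.2).compr₂ (ψ p.1)

def mulCoeff (n : ℕ) : A →ₗ[R] A →ₗ[R] A :=
  ∑ p ∈ antidiagonal n, mul.compl₁₂ (ψ p.1) (ψ p.2)

def obstruction (n : ℕ) : A →ₗ[R] A →ₗ[R] A :=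
  compCoeff Gd ψ n - mulCoeff mul ψ n

@[simp]
lemma compCoeff_apply (n : ℕ) (x y : A) :
    compCoeff Gd ψ n x y = ∑ p ∈ antidiagonal n, ψ p.1 (Gd p.2 x y) := by
  simp [compCoeff, LinearMap.sum_apply]

@[simp]
lemma mulCoeff_apply (n : ℕ) (x y : A) :
    mulCoeff mul ψ n x y = ∑ p ∈ antidiagonal n, mul (ψ p.1 x) (ψ p.2 y) := by
  simp [mulCoeff, LinearMap.sum_apply]

lemma compCoeff_eq_obstruction_add (n : ℕ) :
    compCoeff Gd ψ n = obstruction mul Gd ψ n + mulCoeff mul ψ n :=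
  (sub_add_cancel _ _).symm

variable {mul Gd ψ}

lemma obstruction_congr {ψ' : ℕ → A →ₗ[R] A} {n : ℕ} (h : ∀ m ≤ n, ψ m = ψ' m) :
    obstruction mul Gd ψ n = obstruction mul Gd ψ' n := by
  have h' : ∀ p ∈ antidiagonal n, ψ p.1 = ψ' p.1 ∧ ψ p.2 = ψ' p.2 := fun p hp => by
    rw [HasAntidiagonal.mem_antidiagonal] at hp
    exact ⟨h _ (by omega), h _ (by omega)⟩
  simp only [obstruction, compCoeff, mulCoeff]
  congr 1 <;> refine sum_congr rfl fun p hp => ?_ <;> simp only [(h' p hp).1, (h' p hp).2]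

lemma obstruction_add_single (hGd : Gd 0 = mul) (hψ : ψ 0 = LinearMap.id) {n : ℕ} (hn : n ≠ 0)
    (f : A →ₗ[R] A) (x y : A) :
    obstruction mul Gd (ψ + Pi.single n f) n x y =
      obstruction mul Gd ψ n x y - (mul x (f y) + mul (f x) y - f (mul x y)) := by
  set χ : ℕ → A →ₗ[R] A := Pi.single n f
  have hχ : ∀ m, m < n → χ m = 0 := fun m hm => by simp [χ, hm.ne]
  have hcomp : ∑ p ∈ antidiagonal n, χ p.1 (Gd p.2 x y) = f (mul x y) := by
    rw [sum_antidiagonal_eq_single_fst fun p _ hp => by simp [hχ _ hp]]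
    simp [χ, hGd]
  have hl : ∑ p ∈ antidiagonal n, mul (ψ p.1 x) (χ p.2 y) = mul x (f y) := by
    rw [sum_antidiagonal_eq_single_snd fun p _ hp => by simp [hχ _ hp]]
    simp [χ, hψ]
  have hr : ∑ p ∈ antidiagonal n, mul (χ p.1 x) (ψ p.2 y) = mul (f x) y := by
    rw [sum_antidiagonal_eq_single_fst fun p _ hp => by simp [hχ _ hp]]
    simp [χ, hψ]
  have hll : ∑ p ∈ antidiagonal n, mul (χ p.1 x) (χ p.2 y) = 0 := by
    rw [sum_antidiagonal_eq_single_fst fun p _ hp => by simp [hχ _ hp]]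
    simp [hχ 0 (Nat.pos_of_ne_zero hn)]
  simp only [obstruction, LinearMap.sub_apply, compCoeff_apply, mulCoeff_apply, Pi.add_apply,
    LinearMap.add_apply, map_add, sum_add_distrib, hcomp, hl, hr, hll]
  abel

lemma sum_antidiagonal3_apply_eq_zero {n : ℕ} {F : ℕ → ℕ → A}
    (hF : ∀ m, ∑ p ∈ antidiagonal m, F p.1 p.2 = 0) :
    ∑ t ∈ antidiagonal3 n, ψ t.1 (F t.2.1 t.2.2) = 0 := by
  rw [← sum_antidiagonal_sum_antidiagonal_snd]
  simp [← map_sum, hF]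

section Expansion

variable (hGd : Gd 0 = mul) (hψ : ψ 0 = LinearMap.id) {n : ℕ}
  (hob : ∀ m < n, obstruction mul Gd ψ m = 0)
include hGd hψ hob

lemma sum_antidiagonal3_comp_comp_left (x y w : A) :
    ∑ t ∈ antidiagonal3 n, ψ t.1 (Gd t.2.1 (Gd t.2.2 x y) w) =
      obstruction mul Gd ψ n (mul x y) w + mul (obstruction mul Gd ψ n x y) w +
        ∑ t ∈ antidiagonal3 n, mul (mul (ψ t.1 x) (ψ t.2.1 y)) (ψ t.2.2 w) := by
  have hob₁ : ∑ p ∈ antidiagonal n, obstruction mul Gd ψ p.1 (Gd p.2 x y) w =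
      obstruction mul Gd ψ n (mul x y) w := by
    rw [sum_antidiagonal_eq_single_fst fun p _ hp => by simp [hob _ hp], hGd]
  have hob₂ : ∑ p ∈ antidiagonal n, mul (obstruction mul Gd ψ p.1 x y) (ψ p.2 w) =
      mul (obstruction mul Gd ψ n x y) w := by
    rw [sum_antidiagonal_eq_single_fst fun p _ hp => by simp [hob _ hp], hψ, LinearMap.id_apply]
  calc ∑ t ∈ antidiagonal3 n, ψ t.1 (Gd t.2.1 (Gd t.2.2 x y) w)
      = ∑ p ∈ antidiagonal n, compCoeff Gd ψ p.1 (Gd p.2 x y) w := by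
        simp only [compCoeff_apply]
        exact (sum_antidiagonal_sum_antidiagonal_fst n _).symm
    _ = obstruction mul Gd ψ n (mul x y) w +
          ∑ t ∈ antidiagonal3 n, mul (ψ t.1 (Gd t.2.2 x y)) (ψ t.2.1 w) := by
        simp only [compCoeff_eq_obstruction_add mul, LinearMap.add_apply, sum_add_distrib, hob₁,
          mulCoeff_apply]
        rw [sum_antidiagonal_sum_antidiagonal_fst n fun t => mul (ψ t.1 (Gd t.2.2 x y)) (ψ t.2.1 w)]
    _ = obstruction mul Gd ψ n (mul x y) w +
          ∑ p ∈ antidiagonal n, mul (compCoeff Gd ψ p.1 x y) (ψ p.2 w) := by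
        rw [← sum_antidiagonal3_swap23, ← sum_antidiagonal_sum_antidiagonal_fst]
        simp [map_sum]
    _ = _ := by
        simp only [compCoeff_eq_obstruction_add mul, LinearMap.add_apply, map_add,
          sum_add_distrib, hob₂, mulCoeff_apply, map_sum, LinearMap.sum_apply, add_assoc,
          sum_antidiagonal_sum_antidiagonal_fst n
            fun t => mul (mul (ψ t.1 x) (ψ t.2.1 y)) (ψ t.2.2 w)]

lemma sum_antidiagonal3_comp_comp_right (w y z : A) :
    ∑ t ∈ antidiagonal3 n, ψ t.1 (Gd t.2.1 w (Gd t.2.2 y z)) =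
      obstruction mul Gd ψ n w (mul y z) + mul w (obstruction mul Gd ψ n y z) +
        ∑ t ∈ antidiagonal3 n, mul (ψ t.1 w) (mul (ψ t.2.1 y) (ψ t.2.2 z)) := by
  have hob₁ : ∑ p ∈ antidiagonal n, obstruction mul Gd ψ p.1 w (Gd p.2 y z) =
      obstruction mul Gd ψ n w (mul y z) := by
    rw [sum_antidiagonal_eq_single_fst fun p _ hp => by simp [hob _ hp], hGd]
  have hob₂ : ∑ p ∈ antidiagonal n, mul (ψ p.1 w) (obstruction mul Gd ψ p.2 y z) =
      mul w (obstruction mul Gd ψ n y z) := by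
    rw [sum_antidiagonal_eq_single_snd fun p _ hp => by simp [hob _ hp], hψ, LinearMap.id_apply]
  calc ∑ t ∈ antidiagonal3 n, ψ t.1 (Gd t.2.1 w (Gd t.2.2 y z))
      = ∑ p ∈ antidiagonal n, compCoeff Gd ψ p.1 w (Gd p.2 y z) := by
        simp only [compCoeff_apply]
        exact (sum_antidiagonal_sum_antidiagonal_fst n _).symm
    _ = obstruction mul Gd ψ n w (mul y z) +
          ∑ t ∈ antidiagonal3 n, mul (ψ t.1 w) (ψ t.2.1 (Gd t.2.2 y z)) := by
        simp only [compCoeff_eq_obstruction_add mul, LinearMap.add_apply, sum_add_distrib, hob₁,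
          mulCoeff_apply]
        rw [sum_antidiagonal_sum_antidiagonal_fst n fun t => mul (ψ t.1 w) (ψ t.2.1 (Gd t.2.2 y z))]
    _ = obstruction mul Gd ψ n w (mul y z) +
          ∑ p ∈ antidiagonal n, mul (ψ p.1 w) (compCoeff Gd ψ p.2 y z) := by
        rw [← sum_antidiagonal_sum_antidiagonal_snd]
        simp [map_sum]
    _ = _ := by
        simp only [compCoeff_eq_obstruction_add mul, LinearMap.add_apply, map_add, sum_add_distrib,
          hob₂, mulCoeff_apply, map_sum, add_assoc, sum_antidiagonal_sum_antidiagonal_snd n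
            fun t => mul (ψ t.1 w) (mul (ψ t.2.1 y) (ψ t.2.2 z))]

end Expansion

end Coefficients

section Identities

variable {R A : Type*} [CommRing R] [AddCommGroup A] [Module R A]
  (G : ZMod 2 → Submodule R A) (mul : A →ₗ[R] A →ₗ[R] A) (α : A →ₗ[R] A)

def IsHomLeftSymmetric : Prop :=
  ∀ i j k : ZMod 2, ∀ x ∈ G i, ∀ y ∈ G j, ∀ z ∈ G k,
    mul (mul x y) (α z) - mul (α x) (mul y z)
      = ((-1 : R) ^ (i.val * j.val)) • (mul (mul y x) (α z) - mul (α y) (mul x z))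

def IsHomRightCommutative : Prop :=
  ∀ i j k : ZMod 2, ∀ x ∈ G i, ∀ y ∈ G j, ∀ z ∈ G k,
    mul (mul x y) (α z) = ((-1 : R) ^ (j.val * k.val)) • mul (mul x z) (α y)

def IsHomCocycle2 (g : A →ₗ[R] A →ₗ[R] A) : Prop :=
  ∀ i j k : ZMod 2, ∀ x ∈ G i, ∀ y ∈ G j, ∀ z ∈ G k,
    g (α x) (mul y z)
      - ((-1 : R) ^ (i.val * j.val)) • g (α y) (mul x z)
      + ((-1 : R) ^ (i.val * j.val)) • g (mul y x) (α z)
      + mul (α x) (g y z)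
      - ((-1 : R) ^ (i.val * j.val)) • mul (α y) (g x z)
      + ((-1 : R) ^ (i.val * j.val)) • mul (g y x) (α z)
      - ((-1 : R) ^ (j.val * k.val)) • g (mul x z) (α y)
      - ((-1 : R) ^ (j.val * k.val)) • mul (g x z) (α y) = 0

def HomH2Vanishes : Prop :=
  ∀ g : A →ₗ[R] A →ₗ[R] A,
    (∀ i j : ZMod 2, ∀ x ∈ G i, ∀ y ∈ G j, g x y ∈ G (i + j)) →
    (∀ x y : A, α (g x y) = g (α x) (α y)) →
    IsHomCocycle2 G mul α g →
    ∃ f : A →ₗ[R] A,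
      (∀ i : ZMod 2, ∀ x ∈ G i, f x ∈ G i) ∧
      (∀ x : A, f (α x) = α (f x)) ∧
      (∀ x y : A, g x y = mul x (f y) + mul (f x) y - f (mul x y))

variable {G mul α} {ψ : ℕ → A →ₗ[R] A} (hψG : ∀ m i, ∀ x ∈ G i, ψ m x ∈ G i)
  (hψα : ∀ m x, ψ m (α x) = α (ψ m x)) {n : ℕ} {i j k : ZMod 2} {x y z : A}
  (hx : x ∈ G i) (hy : y ∈ G j) (hz : z ∈ G k)
include hψG hψα hx hy hz

lemma IsHomRightCommutative.sum_antidiagonal3 (hrn : IsHomRightCommutative G mul α) :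
    ∑ t ∈ antidiagonal3 n, mul (mul (ψ t.1 x) (ψ t.2.1 y)) (ψ t.2.2 (α z)) =
      ((-1 : R) ^ (j.val * k.val)) •
        ∑ t ∈ antidiagonal3 n, mul (mul (ψ t.1 x) (ψ t.2.1 z)) (ψ t.2.2 (α y)) := by
  simp only [hψα, smul_sum, hrn _ _ _ _ (hψG _ _ _ hx) _ (hψG _ _ _ hy) _ (hψG _ _ _ hz)]
  exact sum_antidiagonal3_swap23 n fun t => ((-1 : R) ^ (j.val * k.val)) •
    mul (mul (ψ t.1 x) (ψ t.2.1 z)) (α (ψ t.2.2 y))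

lemma IsHomLeftSymmetric.sum_antidiagonal3 (hls : IsHomLeftSymmetric G mul α) :
    ∑ t ∈ antidiagonal3 n, mul (mul (ψ t.1 x) (ψ t.2.1 y)) (ψ t.2.2 (α z)) -
        ∑ t ∈ antidiagonal3 n, mul (ψ t.1 (α x)) (mul (ψ t.2.1 y) (ψ t.2.2 z)) =
      ((-1 : R) ^ (i.val * j.val)) •
        (∑ t ∈ antidiagonal3 n, mul (mul (ψ t.1 y) (ψ t.2.1 x)) (ψ t.2.2 (α z)) -
          ∑ t ∈ antidiagonal3 n, mul (ψ t.1 (α y)) (mul (ψ t.2.1 x) (ψ t.2.2 z))) := by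
  rw [← sum_antidiagonal3_swap12 n fun t => mul (mul (ψ t.1 y) (ψ t.2.1 x)) (ψ t.2.2 (α z)),
    ← sum_antidiagonal3_swap12 n fun t => mul (ψ t.1 (α y)) (mul (ψ t.2.1 x) (ψ t.2.2 z))]
  simp only [hψα, ← sum_sub_distrib, smul_sum,
    hls _ _ _ _ (hψG _ _ _ hx) _ (hψG _ _ _ hy) _ (hψG _ _ _ hz)]

end Identities

section Deformation

variable {𝕜 A : Type*} [Field 𝕜] [AddCommGroup A] [Module 𝕜 A]
  {G : ZMod 2 → Submodule 𝕜 A} {mul : A →ₗ[𝕜] A →ₗ[𝕜] A} {α : A →ₗ[𝕜] A}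
  {Gd : ℕ → A →ₗ[𝕜] A →ₗ[𝕜] A}

variable (G mul α Gd) in
structure IsEquivUpTo (k : ℕ) (ψ : ℕ → A →ₗ[𝕜] A) : Prop where
  zero_eq : ψ 0 = LinearMap.id
  mem : ∀ m i, ∀ x ∈ G i, ψ m x ∈ G i
  comm : ∀ m x, ψ m (α x) = α (ψ m x)
  obstruction_eq_zero : ∀ m ≤ k, obstruction mul Gd ψ m = 0

variable (hGd : IsDeformation G mul α Gd)
  (hmul : ∀ i j : ZMod 2, ∀ x ∈ G i, ∀ y ∈ G j, mul x y ∈ G (i + j))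
  (hα : ∀ x y : A, α (mul x y) = mul (α x) (α y))
  (hls : IsHomLeftSymmetric G mul α) (hrn : IsHomRightCommutative G mul α)
include hGd

section Step

variable {k : ℕ} {ψ : ℕ → A →ₗ[𝕜] A} (hψ : IsEquivUpTo G mul α Gd k ψ)
include hψ

include hmul in
lemma IsEquivUpTo.obstruction_mem (n : ℕ) {i j : ZMod 2} {x y : A} (hx : x ∈ G i) (hy : y ∈ G j) :
    obstruction mul Gd ψ n x y ∈ G (i + j) := by
  simp only [obstruction, LinearMap.sub_apply, compCoeff_apply, mulCoeff_apply]
  exact sub_mem (sum_mem fun p _ => hψ.mem _ _ _ (hGd.2.1 _ _ _ _ hx _ hy))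
    (sum_mem fun p _ => hmul _ _ _ (hψ.mem _ _ _ hx) _ (hψ.mem _ _ _ hy))

include hα in
lemma IsEquivUpTo.map_obstruction (n : ℕ) (x y : A) :
    α (obstruction mul Gd ψ n x y) = obstruction mul Gd ψ n (α x) (α y) := by
  simp only [obstruction, LinearMap.sub_apply, compCoeff_apply, mulCoeff_apply, map_sub, map_sum,
    ← hψ.comm, hGd.2.2.1, hα]

section Homogeneous

variable {i j l : ZMod 2} {x y z : A} (hx : x ∈ G i) (hy : y ∈ G j) (hz : z ∈ G l)
include hx hy hz

include hrn in
lemma IsEquivUpTo.obstruction_rightComm :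
    obstruction mul Gd ψ (k + 1) (mul x y) (α z) + mul (obstruction mul Gd ψ (k + 1) x y) (α z) =
      ((-1 : 𝕜) ^ (j.val * l.val)) • (obstruction mul Gd ψ (k + 1) (mul x z) (α y) +
        mul (obstruction mul Gd ψ (k + 1) x z) (α y)) := by
  have hob : ∀ m < k + 1, obstruction mul Gd ψ m = 0 := fun m hm =>
    hψ.obstruction_eq_zero m (Nat.le_of_lt_succ hm)
  have h := sum_antidiagonal3_apply_eq_zero (n := k + 1) (ψ := ψ)
    (F := fun b c => Gd b (Gd c x y) (α z) - ((-1 : 𝕜) ^ (j.val * l.val)) • Gd b (Gd c x z) (α y))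
    fun m => hGd.2.2.2.2 m i j l x hx y hy z hz
  simp only [map_sub, map_smul, sum_sub_distrib, ← smul_sum,
    sum_antidiagonal3_comp_comp_left hGd.1 hψ.zero_eq hob] at h
  rw [hrn.sum_antidiagonal3 hψ.mem hψ.comm hx hy hz] at h
  linear_combination (norm := module) h

include hls in
lemma IsEquivUpTo.obstruction_leftSymm :
    obstruction mul Gd ψ (k + 1) (α x) (mul y z) + mul (α x) (obstruction mul Gd ψ (k + 1) y z) -
        ((-1 : 𝕜) ^ (i.val * j.val)) • (obstruction mul Gd ψ (k + 1) (α y) (mul x z) +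
          mul (α y) (obstruction mul Gd ψ (k + 1) x z)) =
      obstruction mul Gd ψ (k + 1) (mul x y) (α z) + mul (obstruction mul Gd ψ (k + 1) x y) (α z) -
        ((-1 : 𝕜) ^ (i.val * j.val)) • (obstruction mul Gd ψ (k + 1) (mul y x) (α z) +
          mul (obstruction mul Gd ψ (k + 1) y x) (α z)) := by
  have hob : ∀ m < k + 1, obstruction mul Gd ψ m = 0 := fun m hm =>
    hψ.obstruction_eq_zero m (Nat.le_of_lt_succ hm)
  have h := sum_antidiagonal3_apply_eq_zero (n := k + 1) (ψ := ψ)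
    (F := fun b c => Gd b (α x) (Gd c y z) - Gd b (Gd c x y) (α z) -
      ((-1 : 𝕜) ^ (i.val * j.val)) • (Gd b (α y) (Gd c x z) - Gd b (Gd c y x) (α z)))
    fun m => hGd.2.2.2.1 m i j l x hx y hy z hz
  simp only [map_sub, map_smul, sum_sub_distrib, ← smul_sum,
    sum_antidiagonal3_comp_comp_left hGd.1 hψ.zero_eq hob,
    sum_antidiagonal3_comp_comp_right hGd.1 hψ.zero_eq hob] at h
  have hls' := hls.sum_antidiagonal3 (n := k + 1) hψ.mem hψ.comm hx hy hz
  linear_combination (norm := module) h + hls'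

end Homogeneous

include hls hrn in
lemma IsEquivUpTo.isHomCocycle2_obstruction :
    IsHomCocycle2 G mul α (obstruction mul Gd ψ (k + 1)) := fun i j l x hx y hy z hz => by
  have hl := hψ.obstruction_leftSymm hGd hls hx hy hz
  have hr := hψ.obstruction_rightComm hGd hrn hx hy hz
  linear_combination (norm := module) hl + hr

include hmul hα hls hrn in
lemma IsEquivUpTo.exists_succ (hH2 : HomH2Vanishes G mul α) :
    ∃ ψ', IsEquivUpTo G mul α Gd (k + 1) ψ' ∧ ∀ m ≤ k, ψ' m = ψ m := by
  obtain ⟨f, hfG, hfα, hf⟩ := hH2 _ (fun _ _ _ hx _ hy => hψ.obstruction_mem hGd hmul _ hx hy)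
    (hψ.map_obstruction hGd hα _) (hψ.isHomCocycle2_obstruction hGd hls hrn)
  let ψ' : ℕ → A →ₗ[𝕜] A := ψ + Pi.single (k + 1) f
  have hlow : ∀ m ≤ k, ψ' m = ψ m := fun m hm => by
    simp [ψ', show m ≠ k + 1 by omega]
  refine ⟨ψ', ⟨?_, ?_, ?_, ?_⟩, hlow⟩
  · simpa [ψ'] using hψ.zero_eq
  · intro m i x hx
    rcases eq_or_ne m (k + 1) with rfl | hm
    · simpa [ψ'] using add_mem (hψ.mem _ _ _ hx) (hfG _ _ hx)
    · simpa [ψ', hm] using hψ.mem m _ _ hx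
  · intro m x
    rcases eq_or_ne m (k + 1) with rfl | hm
    · simp [ψ', hψ.comm, hfα]
    · simp [ψ', hm, hψ.comm]
  · intro m hm
    rcases hm.lt_or_eq with hm | rfl
    · rw [obstruction_congr fun p hp => hlow p (by omega)]
      exact hψ.obstruction_eq_zero m (by omega)
    · ext x y
      rw [obstruction_add_single hGd.1 hψ.zero_eq k.succ_ne_zero, ← hf, sub_self,
        LinearMap.zero_apply, LinearMap.zero_apply]

end Step

include hmul hα hls hrn in
theorem exists_forall_isEquivUpTo (hH2 : HomH2Vanishes G mul α) :
    ∃ φ : ℕ → A →ₗ[𝕜] A, ∀ k, IsEquivUpTo G mul α Gd k φ := by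
  have h0 : IsEquivUpTo G mul α Gd 0 fun _ => LinearMap.id :=
    ⟨rfl, fun _ _ _ hx => hx, fun _ _ => rfl, fun m hm => by
      ext x y
      simp [Nat.le_zero.1 hm, obstruction, hGd.1]⟩
  obtain ⟨s, hs, hsucc⟩ := exists_seq_of_forall_exists_succ
    (R := fun k ψ ψ' => ∀ m ≤ k, ψ' m = ψ m) h0
    fun k ψ hψ => hψ.exists_succ hGd hmul hα hls hrn hH2
  have hstable : ∀ k, ∀ m ≤ k, s k m = s m m := by
    intro k
    induction k with
    | zero => intro m hm; rw [Nat.le_zero.1 hm]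
    | succ k ih =>
      intro m hm
      rcases hm.lt_or_eq with hm | rfl
      · rw [hsucc k m (by omega), ih m (by omega)]
      · rfl
  refine ⟨fun m => s m m, fun k => ⟨(hs 0).zero_eq, fun m => (hs m).mem m,
    fun m => (hs m).comm m, fun m hm => ?_⟩⟩
  rw [obstruction_congr (ψ' := s k) fun p hp => (hstable k p (hp.trans hm)).symm]
  exact (hs k).obstruction_eq_zero m hm

end Deformation

end HomNovikov

theorem stmt18_general
    (𝕜 A : Type*) [Field 𝕜] [AddCommGroup A] [Module 𝕜 A]
    (G : ZMod 2 → Submodule 𝕜 A)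
    (mul : A →ₗ[𝕜] A →ₗ[𝕜] A) (α : A →ₗ[𝕜] A)
    (hmul_even : ∀ i j : ZMod 2, ∀ x ∈ G i, ∀ y ∈ G j, mul x y ∈ G (i + j))
    (hα_mul : ∀ x y : A, α (mul x y) = mul (α x) (α y))
    (hls : ∀ i j k : ZMod 2, ∀ x ∈ G i, ∀ y ∈ G j, ∀ z ∈ G k,
      mul (mul x y) (α z) - mul (α x) (mul y z)
        = ((-1 : 𝕜) ^ (i.val * j.val)) • (mul (mul y x) (α z) - mul (α y) (mul x z)))
    (hrn : ∀ i j k : ZMod 2, ∀ x ∈ G i, ∀ y ∈ G j, ∀ z ∈ G k,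
      mul (mul x y) (α z) = ((-1 : 𝕜) ^ (j.val * k.val)) • mul (mul x z) (α y))
    (hH2 : ∀ g : A →ₗ[𝕜] A →ₗ[𝕜] A,
      (∀ i j : ZMod 2, ∀ x ∈ G i, ∀ y ∈ G j, g x y ∈ G (i + j)) →
      (∀ x y : A, α (g x y) = g (α x) (α y)) →
      (∀ i j k : ZMod 2, ∀ x ∈ G i, ∀ y ∈ G j, ∀ z ∈ G k,
        g (α x) (mul y z)
          - ((-1 : 𝕜) ^ (i.val * j.val)) • g (α y) (mul x z)
          + ((-1 : 𝕜) ^ (i.val * j.val)) • g (mul y x) (α z)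
          + mul (α x) (g y z)
          - ((-1 : 𝕜) ^ (i.val * j.val)) • mul (α y) (g x z)
          + ((-1 : 𝕜) ^ (i.val * j.val)) • mul (g y x) (α z)
          - ((-1 : 𝕜) ^ (j.val * k.val)) • g (mul x z) (α y)
          - ((-1 : 𝕜) ^ (j.val * k.val)) • mul (g x z) (α y) = 0) →
      ∃ f : A →ₗ[𝕜] A,
        (∀ i : ZMod 2, ∀ x ∈ G i, f x ∈ G i) ∧
        (∀ x : A, f (α x) = α (f x)) ∧
        (∀ x y : A, g x y = mul x (f y) + mul (f x) y - f (mul x y))) :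
    ∀ Gd : ℕ → A →ₗ[𝕜] A →ₗ[𝕜] A, IsDeformation G mul α Gd →
      ∃ φ : ℕ → A →ₗ[𝕜] A,
        φ 0 = LinearMap.id ∧
        (∀ n : ℕ, ∀ x : A, φ n (α x) = α (φ n x)) ∧
        (∀ n : ℕ, ∀ x y : A,
          ∑ p ∈ Finset.HasAntidiagonal.antidiagonal n, φ p.1 (Gd p.2 x y)
            = ∑ p ∈ Finset.HasAntidiagonal.antidiagonal n, mul (φ p.1 x) (φ p.2 y)) := by
  intro Gd hGd
  obtain ⟨φ, hφ⟩ :=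
    HomNovikov.exists_forall_isEquivUpTo hGd hmul_even hα_mul hls hrn hH2
  refine ⟨φ, (hφ 0).zero_eq, (hφ 0).comm, fun n x y => ?_⟩
  have h := congrArg (fun g => g x y) ((hφ n).obstruction_eq_zero n le_rfl)
  simpa [HomNovikov.obstruction, sub_eq_zero] using h

theorem stmt18
    (𝕜 A : Type*) [Field 𝕜] [AddCommGroup A] [Module 𝕜 A]
    (G : ZMod 2 → Submodule 𝕜 A) (hG : DirectSum.IsInternal G)
    (mul : A →ₗ[𝕜] A →ₗ[𝕜] A) (α : A →ₗ[𝕜] A)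
    (hmul_even : ∀ i j : ZMod 2, ∀ x ∈ G i, ∀ y ∈ G j, mul x y ∈ G (i + j))
    (hα_even : ∀ i : ZMod 2, ∀ x ∈ G i, α x ∈ G i)
    (hα_mul : ∀ x y : A, α (mul x y) = mul (α x) (α y))
    (hls : ∀ i j k : ZMod 2, ∀ x ∈ G i, ∀ y ∈ G j, ∀ z ∈ G k,
      mul (mul x y) (α z) - mul (α x) (mul y z)
        = ((-1 : 𝕜) ^ (i.val * j.val)) • (mul (mul y x) (α z) - mul (α y) (mul x z)))
    (hrn : ∀ i j k : ZMod 2, ∀ x ∈ G i, ∀ y ∈ G j, ∀ z ∈ G k,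
      mul (mul x y) (α z) = ((-1 : 𝕜) ^ (j.val * k.val)) • mul (mul x z) (α y))
    (hH2 : ∀ g : A →ₗ[𝕜] A →ₗ[𝕜] A,
      (∀ i j : ZMod 2, ∀ x ∈ G i, ∀ y ∈ G j, g x y ∈ G (i + j)) →
      (∀ x y : A, α (g x y) = g (α x) (α y)) →
      (∀ i j k : ZMod 2, ∀ x ∈ G i, ∀ y ∈ G j, ∀ z ∈ G k,
        g (α x) (mul y z)
          - ((-1 : 𝕜) ^ (i.val * j.val)) • g (α y) (mul x z)
          + ((-1 : 𝕜) ^ (i.val * j.val)) • g (mul y x) (α z)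
          + mul (α x) (g y z)
          - ((-1 : 𝕜) ^ (i.val * j.val)) • mul (α y) (g x z)
          + ((-1 : 𝕜) ^ (i.val * j.val)) • mul (g y x) (α z)
          - ((-1 : 𝕜) ^ (j.val * k.val)) • g (mul x z) (α y)
          - ((-1 : 𝕜) ^ (j.val * k.val)) • mul (g x z) (α y) = 0) →
      ∃ f : A →ₗ[𝕜] A,
        (∀ i : ZMod 2, ∀ x ∈ G i, f x ∈ G i) ∧
        (∀ x : A, f (α x) = α (f x)) ∧
        (∀ x y : A, g x y = mul x (f y) + mul (f x) y - f (mul x y))) :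
    ∀ Gd : ℕ → A →ₗ[𝕜] A →ₗ[𝕜] A, IsDeformation G mul α Gd →
      ∃ φ : ℕ → A →ₗ[𝕜] A,
        φ 0 = LinearMap.id ∧
        (∀ n : ℕ, ∀ x : A, φ n (α x) = α (φ n x)) ∧
        (∀ n : ℕ, ∀ x y : A,
          ∑ p ∈ Finset.HasAntidiagonal.antidiagonal n, φ p.1 (Gd p.2 x y)
            = ∑ p ∈ Finset.HasAntidiagonal.antidiagonal n, mul (φ p.1 x) (φ p.2 y)) :=
  stmt18_general 𝕜 A G mul α hmul_even hα_mul hls hrn hH2
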